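/- For any connected graph G that admits a J-colouring, J(G) ≤ δ(G) + 1, where δ(G) is the minimum degree of G. -/

import Mathlib

open SimpleGraph

/-- A proper colouring of `G` with `k` colours in which every vertex's closed
neighbourhood meets every colour class (a J-colouring). -/
def IsJCol {V : Type*} (G : SimpleGraph V) {k : ℕ} (c : V → Fin k) : Prop :=
  (∀ u v, G.Adj u v → c u ≠ c v) ∧
  (∀ v : V, ∀ i : Fin k, ∃ u, (u = v ∨ G.Adj v u) ∧ c u = i)

/-- `G` admits a J-colouring with `k` colours. -/
def HasJCol {V : Type*} (G : SimpleGraph V) (k : ℕ) : Prop :=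
  ∃ c : V → Fin k, IsJCol G c

/-- The J-chromatic number: the maximum number of colours in a J-colouring. -/
noncomputable def Jnum {V : Type*} (G : SimpleGraph V) : ℕ :=
  sSup {k | HasJCol G k}

/-- A proper colouring in which every internal vertex (degree ≥ 2) has its closed
neighbourhood meeting every colour class (a J*-colouring). -/
def IsJStarCol {V : Type*} (G : SimpleGraph V) {k : ℕ} (c : V → Fin k) : Prop :=
  (∀ u v, G.Adj u v → c u ≠ c v) ∧
  (∀ v : V, (∃ a b, a ≠ b ∧ G.Adj v a ∧ G.Adj v b) →
    ∀ i : Fin k, ∃ u, (u = v ∨ G.Adj v u) ∧ c u = i)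

/-- `G` admits a J*-colouring with `k` colours. -/
def HasJStarCol {V : Type*} (G : SimpleGraph V) (k : ℕ) : Prop :=
  ∃ c : V → Fin k, IsJStarCol G c

/-- The modified J-chromatic number. -/
noncomputable def JStarNum {V : Type*} (G : SimpleGraph V) : ℕ :=
  sSup {k | HasJStarCol G k}

theorem IsJCol.le_degree_add_one {V : Type*} {G : SimpleGraph V} {k : ℕ} {c : V → Fin k}
    (hc : IsJCol G c) (v : V) [Fintype (G.neighborSet v)] : k ≤ G.degree v + 1 := by
  classical
  have hsurj : Set.SurjOn c ↑(insert v (G.neighborFinset v)) (Finset.univ : Finset (Fin k)) :=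
    fun i _ ↦ by simpa [eq_comm] using hc.2 v i
  calc k = (Finset.univ : Finset (Fin k)).card := (Finset.card_fin k).symm
    _ ≤ (insert v (G.neighborFinset v)).card := Finset.card_le_card_of_surjOn c hsurj
    _ = G.degree v + 1 := by
      rw [Finset.card_insert_of_notMem (by simp), card_neighborFinset_eq_degree]

theorem Jnum_le_degree_add_one {V : Type*} (G : SimpleGraph V) (v : V)
    [Fintype (G.neighborSet v)] : Jnum G ≤ G.degree v + 1 :=
  csSup_le' fun _ ⟨_, hc⟩ ↦ hc.le_degree_add_one v

theorem Jnum_le_minDegree_add_one_general {V : Type*} [Fintype V] (G : SimpleGraph V)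
    [DecidableRel G.Adj] (hconn : G.Connected) :
    Jnum G ≤ G.minDegree + 1 := by
  have := hconn.nonempty
  obtain ⟨v, hv⟩ := G.exists_minimal_degree_vertex
  exact hv ▸ Jnum_le_degree_add_one G v

/-- For any connected graph `G` admitting a J-colouring, `J(G) ≤ δ(G) + 1`. -/
theorem Jnum_le_minDegree_add_one {V : Type*} [Fintype V] (G : SimpleGraph V)
    [DecidableRel G.Adj] (hconn : G.Connected) (h : ∃ k, HasJCol G k) :
    Jnum G ≤ G.minDegree + 1 :=
  Jnum_le_minDegree_add_one_general G hconn
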